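/- Let essential matrices be given as E₁₂ = [b₁₂]× R₁₂, E₂₃ = [b₂₃]× R₂₃, E₃₁ = [b₃₁]× R₃₁ with Rᵢⱼ ∈ SO(3) and bᵢⱼ ∈ ℝ³. If R₁₂R₂₃R₃₁ = I and R₁₂ᵀ b₁₂ + R₂₃ b₃₁ + b₂₃ = 0, then the triplet is compatible: there exist R₁, R₂, R₃ ∈ SO(3) and b₁, b₂, b₃ ∈ ℝ³ with Eᵢⱼ = Rᵢ [bᵢ − bⱼ]× Rⱼᵀ for (i,j) ∈ {(1,2),(2,3),(3,1)}. -/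

import Mathlib

/-! Take the first camera as reference: `R₁ = 1`, `b₁ = 0`, `R₂ = R₁₂ᵀ`, `b₂ = -b₁₂`,
`R₃ = R₃₁`, `b₃ = R₃₁ᵀ b₃₁`. The first equation is then immediate. The other two follow from
the equivariance `[R a]× = R [a]× Rᵀ` of the cross-product matrix under rotations (which comes
from `adj R = Rᵀ`), once the cycle condition is read as `R₂₃ = R₁₂ᵀ R₃₁ᵀ` and the
translation condition as `R₁₂ b₂₃ = b₂ - b₃`. -/

open Matrix

/-- The cross-product matrix of a vector `a ∈ ℝ³`. -/
def skew (a : Fin 3 → ℝ) : Matrix (Fin 3) (Fin 3) ℝ :=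
  !![0, -a 2, a 1; a 2, 0, -a 0; -a 1, a 0, 0]

lemma skew_mulVec_mul (M : Matrix (Fin 3) (Fin 3) ℝ) (a : Fin 3 → ℝ) :
    skew (M *ᵥ a) * M = M.adjugateᵀ * skew a := by
  ext i j
  fin_cases i <;> fin_cases j <;>
    simp [skew, mulVec, mul_apply, Fin.sum_univ_three, adjugate_fin_three, dotProduct] <;> ring

lemma skew_mulVec_of_rotation {R : Matrix (Fin 3) (Fin 3) ℝ} (hR : R * Rᵀ = 1)
    (hdet : R.det = 1) (a : Fin 3 → ℝ) : skew (R *ᵥ a) = R * skew a * Rᵀ := by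
  have hadj : R.adjugate = Rᵀ := by
    rw [← inv_eq_right_inv hR, inv_def, hdet, Ring.inverse_one, one_smul]
  calc skew (R *ᵥ a) = skew (R *ᵥ a) * R * Rᵀ := by rw [mul_assoc, hR, mul_one]
    _ = R * skew a * Rᵀ := by rw [skew_mulVec_mul, hadj, transpose_transpose]

theorem sufficient_Rt_compatibility_general
    (R₁₂ R₂₃ R₃₁ : Matrix (Fin 3) (Fin 3) ℝ) (b₁₂ b₂₃ b₃₁ : Fin 3 → ℝ)
    (hR₁₂ : R₁₂ * R₁₂ᵀ = 1) (hR₁₂det : R₁₂.det = 1)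
    (hR₃₁ : R₃₁ * R₃₁ᵀ = 1) (hR₃₁det : R₃₁.det = 1)
    (hprod : R₁₂ * R₂₃ * R₃₁ = 1)
    (hsum : R₁₂ᵀ *ᵥ b₁₂ + R₂₃ *ᵥ b₃₁ + b₂₃ = 0) :
    ∃ (R₁ R₂ R₃ : Matrix (Fin 3) (Fin 3) ℝ) (b₁ b₂ b₃ : Fin 3 → ℝ),
      R₁ * R₁ᵀ = 1 ∧ R₁.det = 1 ∧ R₂ * R₂ᵀ = 1 ∧ R₂.det = 1 ∧
      R₃ * R₃ᵀ = 1 ∧ R₃.det = 1 ∧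
      skew b₁₂ * R₁₂ = R₁ * skew (b₁ - b₂) * R₂ᵀ ∧
      skew b₂₃ * R₂₃ = R₂ * skew (b₂ - b₃) * R₃ᵀ ∧
      skew b₃₁ * R₃₁ = R₃ * skew (b₃ - b₁) * R₁ᵀ := by
  have hR₁₂' : R₁₂ᵀ * R₁₂ = 1 := mul_eq_one_comm.mp hR₁₂
  have hR₃₁' : R₃₁ᵀ * R₃₁ = 1 := mul_eq_one_comm.mp hR₃₁
  have hcycle : R₁₂ * R₂₃ = R₃₁ᵀ := by
    rw [← mul_one (R₁₂ * R₂₃), ← hR₃₁, ← mul_assoc, hprod, one_mul]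
  have hR₂₃ : R₂₃ = R₁₂ᵀ * R₃₁ᵀ := by rw [← hcycle, ← mul_assoc, hR₁₂', one_mul]
  have hb₂₃ : R₁₂ *ᵥ b₂₃ = -b₁₂ - R₃₁ᵀ *ᵥ b₃₁ := by
    rw [eq_neg_of_add_eq_zero_right hsum, ← hcycle, mulVec_neg, mulVec_add, mulVec_mulVec,
      mulVec_mulVec, hR₁₂, one_mulVec, neg_add, sub_eq_add_neg]
  refine ⟨1, R₁₂ᵀ, R₃₁, 0, -b₁₂, R₃₁ᵀ *ᵥ b₃₁, by simp, by simp, by simpa using hR₁₂',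
    by simpa using hR₁₂det, hR₃₁, hR₃₁det, by simp, ?_, ?_⟩
  · rw [← hb₂₃, skew_mulVec_of_rotation hR₁₂ hR₁₂det, hR₂₃]
    simp only [← mul_assoc, hR₁₂', one_mul]
  · rw [sub_zero, transpose_one, mul_one,
      skew_mulVec_of_rotation (by simpa using hR₃₁') (by simpa using hR₃₁det)]
    simp only [← mul_assoc, hR₃₁, one_mul, transpose_transpose]

/-- If `R₁₂R₂₃R₃₁ = I` and `R₁₂ᵀ b₁₂ + R₂₃ b₃₁ + b₂₃ = 0`, then the triplet
`E₁₂ = [b₁₂]× R₁₂`, `E₂₃ = [b₂₃]× R₂₃`, `E₃₁ = [b₃₁]× R₃₁` is compatible. -/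
theorem sufficient_Rt_compatibility
    (R₁₂ R₂₃ R₃₁ : Matrix (Fin 3) (Fin 3) ℝ) (b₁₂ b₂₃ b₃₁ : Fin 3 → ℝ)
    (hR₁₂ : R₁₂ * R₁₂ᵀ = 1) (hR₁₂det : R₁₂.det = 1)
    (hR₂₃ : R₂₃ * R₂₃ᵀ = 1) (hR₂₃det : R₂₃.det = 1)
    (hR₃₁ : R₃₁ * R₃₁ᵀ = 1) (hR₃₁det : R₃₁.det = 1)
    (hprod : R₁₂ * R₂₃ * R₃₁ = 1)
    (hsum : R₁₂ᵀ *ᵥ b₁₂ + R₂₃ *ᵥ b₃₁ + b₂₃ = 0) :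
    ∃ (R₁ R₂ R₃ : Matrix (Fin 3) (Fin 3) ℝ) (b₁ b₂ b₃ : Fin 3 → ℝ),
      R₁ * R₁ᵀ = 1 ∧ R₁.det = 1 ∧ R₂ * R₂ᵀ = 1 ∧ R₂.det = 1 ∧
      R₃ * R₃ᵀ = 1 ∧ R₃.det = 1 ∧
      skew b₁₂ * R₁₂ = R₁ * skew (b₁ - b₂) * R₂ᵀ ∧
      skew b₂₃ * R₂₃ = R₂ * skew (b₂ - b₃) * R₃ᵀ ∧
      skew b₃₁ * R₃₁ = R₃ * skew (b₃ - b₁) * R₁ᵀ :=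
  sufficient_Rt_compatibility_general R₁₂ R₂₃ R₃₁ b₁₂ b₂₃ b₃₁ hR₁₂ hR₁₂det hR₃₁ hR₃₁det hprod hsum
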